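/- With g_1,…,g_t chosen according to Construction III, for every α ∈ F∖{α*} the set {g_1(α),…,g_t(α)} has rank at most t − s over B = GF(q), for every 1 ≤ s < t; indeed g_i(α) = L_W(u_i(α − α*))/(α − α*), and the elements L_W(u_i(α − α*)) all lie in the image L_W(F), a B-subspace of dimension t − s. -/

import Mathlib

open Polynomial
open scoped Classical

/-!
The subspace polynomial `L_W(x) = ∏_{w ∈ W} (x - w)` is `B`-linear: `L_W(X + y) - L_W(y)` is monic
of degree `|W|` and vanishes on `W`, so it equals `L_W`; and `L_W(c x) = c^{|W|} L_W(x) = c L_W(x)`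
for `c ∈ B` because `|W|` is a power of `q`. Since `L_W` kills `W`, its image has dimension at most
`t - s`. Dividing out the root `α*` gives `gᵢ(α) = (α - α*)⁻¹ L_W(uᵢ(α - α*))`, so all `gᵢ(α)` lie in
`(α - α*)⁻¹ L_W(F)`, a subspace of dimension at most `t - s`.
-/

section SubspacePoly

variable {R S : Type*} [CommRing R] [SetLike S R] (W : S) [Fintype W]

noncomputable def subspacePoly : R[X] := ∏ w : W, (X - C (w : R))

theorem subspacePoly_monic : (subspacePoly W).Monic :=
  monic_prod_of_monic _ _ fun _ _ => monic_X_sub_C _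

theorem natDegree_subspacePoly [Nontrivial R] :
    (subspacePoly W).natDegree = Fintype.card W := by
  simp [subspacePoly]

theorem eval_subspacePoly (x : R) : (subspacePoly W).eval x = ∏ w : W, (x - w) := by
  simp [subspacePoly, eval_prod]

theorem eval_subspacePoly_of_mem {x : R} (hx : x ∈ W) : (subspacePoly W).eval x = 0 := by
  rw [eval_subspacePoly]
  exact Finset.prod_eq_zero (Finset.mem_univ ⟨x, hx⟩) (sub_self x)

variable [AddSubgroupClass S R]

theorem eval_subspacePoly_add_of_mem {w : R} (hw : w ∈ W) (y : R) :
    (subspacePoly W).eval (w + y) = (subspacePoly W).eval y := by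
  simp only [eval_subspacePoly]
  exact Fintype.prod_equiv (Equiv.subRight ⟨w, hw⟩) _ _ fun v => by
    simp only [Equiv.subRight_apply, AddSubgroupClass.coe_sub]; ring

theorem eval_subspacePoly_add [IsDomain R] (x y : R) :
    (subspacePoly W).eval (x + y) = (subspacePoly W).eval x + (subspacePoly W).eval y := by
  set L := subspacePoly W
  have hL : L.Monic := subspacePoly_monic W
  have hLdeg : L.degree = Fintype.card W := by
    rw [degree_eq_natDegree hL.ne_zero, natDegree_subspacePoly]
  have hP : (L.comp (X + C y)).Monic := hL.comp_X_add_C y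
  have hPdeg : (L.comp (X + C y)).degree = L.degree := by
    rw [degree_eq_natDegree hP.ne_zero, degree_eq_natDegree hL.ne_zero, natDegree_comp,
      natDegree_X_add_C, mul_one]
  have hpos : 0 < (L.comp (X + C y)).degree := by
    have : Nonempty W := ⟨⟨0, zero_mem W⟩⟩
    rw [hPdeg, hLdeg]
    exact_mod_cast Fintype.card_pos
  have hQ : (L.comp (X + C y) - C (L.eval y)).Monic := hP.sub_of_left (degree_C_le.trans_lt hpos)
  have hQdeg : (L.comp (X + C y) - C (L.eval y)).degree = L.degree := by
    rw [degree_sub_C hpos, hPdeg]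
  have key : L.comp (X + C y) - C (L.eval y) = L := by
    refine eq_of_degree_le_of_eval_index_eq (v := ((↑) : W → R)) Finset.univ
      Subtype.val_injective.injOn ?_ hQdeg ?_ fun w _ => ?_
    · rw [hQdeg, hLdeg, Finset.card_univ]
    · rw [hQ.leadingCoeff, hL.leadingCoeff]
    · simp [L, eval_subspacePoly_add_of_mem W w.2, eval_subspacePoly_of_mem W w.2]
  simpa [sub_eq_iff_eq_add] using congr_arg (eval x) key

end SubspacePoly

section FiniteField

variable {B F : Type*} [Field B] [Fintype B] [Field F] [Algebra B F] (W : Submodule B F)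
  [Fintype W]

theorem eval_subspacePoly_smul (c : B) (x : F) :
    (subspacePoly W).eval (c • x) = c • (subspacePoly W).eval x := by
  rcases eq_or_ne c 0 with rfl | hc
  · simp [eval_subspacePoly_of_mem W W.zero_mem]
  have hpow : c ^ Fintype.card W = c := by
    rw [Module.card_eq_pow_finrank (K := B), FiniteField.pow_card_pow]
  simp only [eval_subspacePoly]
  calc ∏ w : W, (c • x - w) = ∏ w : W, c • (x - w) :=
        Fintype.prod_equiv (LinearEquiv.smulOfNeZero B W c hc).symm _ _ fun w => by
          simp [smul_sub, Units.smul_def, smul_smul, hc]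
    _ = c • ∏ w : W, (x - w) := by
        rw [Finset.prod_smul, Finset.prod_const, Finset.card_univ, hpow]

noncomputable def subspacePolyLinearMap : F →ₗ[B] F where
  toFun := (subspacePoly W).eval
  map_add' := eval_subspacePoly_add W
  map_smul' := eval_subspacePoly_smul W

theorem subspacePolyLinearMap_apply (x : F) :
    subspacePolyLinearMap W x = (subspacePoly W).eval x := rfl

theorem le_ker_subspacePolyLinearMap : W ≤ LinearMap.ker (subspacePolyLinearMap W) :=
  fun _ hw => eval_subspacePoly_of_mem W hw

end FiniteField

theorem LinearMap.finrank_range_le_of_le_ker {K V V₂ : Type*} [DivisionRing K] [AddCommGroup V]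
    [Module K V] [FiniteDimensional K V] [AddCommGroup V₂] [Module K V₂] (f : V →ₗ[K] V₂)
    {W : Submodule K V} (hW : W ≤ LinearMap.ker f) :
    Module.finrank K (LinearMap.range f) ≤ Module.finrank K V - Module.finrank K W := by
  have := Submodule.finrank_mono hW
  have := LinearMap.finrank_range_add_finrank_ker f
  omega

theorem Polynomial.eval_divByMonic_X_sub_C_of_isRoot {K : Type*} [Field K] {p : K[X]} {a x : K}
    (hp : p.IsRoot a) (hx : x ≠ a) : (p /ₘ (X - C a)).eval x = p.eval x / (x - a) := by
  rw [eq_div_iff (sub_ne_zero.2 hx), mul_comm]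
  simpa using congr_arg (eval x) (mul_divByMonic_eq_iff_isRoot.2 hp)

theorem constructionIII_rank_at_available_general
    (t s : ℕ) (B F : Type*) [Field B] [Fintype B] [Field F] [Fintype F]
    [Algebra B F]
    (ht : Module.finrank B F = t)
    (αstar : F) (u : Module.Basis (Fin t) B F)
    (W : Submodule B F) (hW : Module.finrank B W = s)
    (g : Fin t → F[X])
    (hg : ∀ i, g i =
      (∏ w ∈ Finset.univ.filter (fun w : F => w ∈ W),
        (C (u i) * (X - C αstar) - C w)) /ₘ (X - C αstar))
    (α : F) (hα : α ≠ αstar) :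
    (∀ i, (g i).eval α =
      (∏ w ∈ Finset.univ.filter (fun w : F => w ∈ W), (u i * (α - αstar) - w))
        / (α - αstar)) ∧
    Module.finrank B
      (Submodule.span B (Set.range fun i => (g i).eval α)) ≤ t - s := by
  have hL : ∀ y, ∏ w ∈ Finset.univ.filter (fun w : F => w ∈ W), (y - w) =
      subspacePolyLinearMap W y := fun y => by
    rw [subspacePolyLinearMap_apply, eval_subspacePoly,
      Finset.prod_subtype _ (p := (· ∈ W)) (fun w => by simp)]
  have hg_eval : ∀ i, (g i).eval α =
      (∏ w ∈ Finset.univ.filter (fun w : F => w ∈ W), (u i * (α - αstar) - w))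
        / (α - αstar) := fun i => by
    rw [hg, eval_divByMonic_X_sub_C_of_isRoot _ hα]
    · simp [eval_prod]
    · rw [IsRoot, eval_prod]
      exact Finset.prod_eq_zero (Finset.mem_filter.2 ⟨Finset.mem_univ _, W.zero_mem⟩) (by simp)
  refine ⟨hg_eval, ?_⟩
  have hspan : Submodule.span B (Set.range fun i => (g i).eval α) ≤
      (LinearMap.range (subspacePolyLinearMap W)).map (LinearMap.mulLeft B (α - αstar)⁻¹) := by
    refine Submodule.span_le.2 (Set.range_subset_iff.2 fun i => ?_)
    rw [hg_eval, hL, div_eq_inv_mul]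
    exact ⟨_, LinearMap.mem_range_self _ _, rfl⟩
  calc _ ≤ _ := Submodule.finrank_mono hspan
    _ ≤ _ := Submodule.finrank_map_le _ _
    _ ≤ _ := LinearMap.finrank_range_le_of_le_ker _ (le_ker_subspacePolyLinearMap W)
    _ = t - s := by rw [ht, hW]

/-- Lemma 8. With `g₁, …, g_t` chosen according to Construction III
(`gᵢ(x) = L_W(uᵢ(x - α*))/(x - α*)` where `L_W(x) = ∏_{w ∈ W} (x - w)`), for every
`α ∈ F \ {α*}` one has `gᵢ(α) = L_W(uᵢ(α - α*))/(α - α*)`, where the elements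
`L_W(uᵢ(α - α*))` all lie in the image `L_W(F)`, and the set `{g₁(α), …, g_t(α)}` has
rank at most `t - s` over `B = GF(q)`, for every `1 ≤ s < t`. -/
theorem constructionIII_rank_at_available
    (q t s : ℕ) (B F : Type*) [Field B] [Fintype B] [Field F] [Fintype F]
    [Algebra B F]
    (hq : Fintype.card B = q) (ht : Module.finrank B F = t)
    (hs1 : 1 ≤ s) (hst : s < t)
    (αstar : F) (u : Module.Basis (Fin t) B F)
    (W : Submodule B F) (hW : Module.finrank B W = s)
    (g : Fin t → F[X])
    (hg : ∀ i, g i =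
      (∏ w ∈ Finset.univ.filter (fun w : F => w ∈ W),
        (C (u i) * (X - C αstar) - C w)) /ₘ (X - C αstar))
    (α : F) (hα : α ≠ αstar) :
    (∀ i, (g i).eval α =
      (∏ w ∈ Finset.univ.filter (fun w : F => w ∈ W), (u i * (α - αstar) - w))
        / (α - αstar)) ∧
    Module.finrank B
      (Submodule.span B (Set.range fun i => (g i).eval α)) ≤ t - s :=
  constructionIII_rank_at_available_general t s B F ht αstar u W hW g hg α hα
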